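/- The second derivatives of the second and third pieces of the cubic trigonometric B-spline agree at the knot 2h, where their common value equals a6: (deriv (deriv P2))(2h) = (deriv (deriv P3))(2h) = −3cos²(h/2)/(2·sin²(h/2)·(1 + 2cos(h))). -/

import Mathlib

/-!
Each piece is a sum of products of three factors `sin ((x - t) / 2)`, and each factor satisfies
`s'' = -s / 4`, so the second derivative of such a product is explicit; at `x = 2h` the three
products making up `P2` contribute `-3 sin (h/2) cos³ (h/2)`, and
`ω = 2 sin³ (h/2) cos (h/2) (1 + 2 cos h)` turns this into the claimed value.
The third piece is the mirror image `P3 x = P2 (4h - x)` of the second about the knot `2h`,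
and reflection preserves second derivatives.
-/

open Real

theorem deriv_deriv_comp_const_sub {𝕜 F : Type*} [NontriviallyNormedField 𝕜]
    [NormedAddCommGroup F] [NormedSpace 𝕜 F] (f : 𝕜 → F) (a x : 𝕜) :
    deriv (deriv fun y => f (a - y)) x = deriv (deriv f) (a - x) := by
  have hf : deriv (fun y => f (a - y)) = fun y => -deriv f (a - y) :=
    funext fun y => deriv_comp_const_sub f a y
  rw [hf, deriv.fun_neg, deriv_comp_const_sub, neg_neg]

theorem hasDerivAt_sin_sub_div_two (a x : ℝ) :
    HasDerivAt (fun y => sin ((y - a) / 2)) (cos ((x - a) / 2) / 2) x := by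
  simpa [div_eq_mul_one_div (cos _)] using (((hasDerivAt_id x).sub_const a).div_const 2).sin

theorem hasDerivAt_cos_sub_div_two (a x : ℝ) :
    HasDerivAt (fun y => cos ((y - a) / 2)) (-sin ((x - a) / 2) / 2) x := by
  simpa [neg_div, div_eq_mul_one_div (sin _)] using
    (((hasDerivAt_id x).sub_const a).div_const 2).cos

noncomputable def sinTriple (a b c x : ℝ) : ℝ :=
  sin ((x - a) / 2) * sin ((x - b) / 2) * sin ((x - c) / 2)

noncomputable def sinTripleDeriv (a b c x : ℝ) : ℝ :=
  (cos ((x - a) / 2) * sin ((x - b) / 2) * sin ((x - c) / 2)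
    + sin ((x - a) / 2) * cos ((x - b) / 2) * sin ((x - c) / 2)
    + sin ((x - a) / 2) * sin ((x - b) / 2) * cos ((x - c) / 2)) / 2

theorem hasDerivAt_sinTriple (a b c x : ℝ) :
    HasDerivAt (sinTriple a b c) (sinTripleDeriv a b c x) x := by
  have := ((hasDerivAt_sin_sub_div_two a x).fun_mul (hasDerivAt_sin_sub_div_two b x)).fun_mul
    (hasDerivAt_sin_sub_div_two c x)
  exact this.congr_deriv (by unfold sinTripleDeriv; ring)

theorem hasDerivAt_sinTripleDeriv (a b c x : ℝ) :
    HasDerivAt (sinTripleDeriv a b c)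
      (-(3 / 4) * sinTriple a b c x
        + (cos ((x - a) / 2) * cos ((x - b) / 2) * sin ((x - c) / 2)
          + cos ((x - a) / 2) * sin ((x - b) / 2) * cos ((x - c) / 2)
          + sin ((x - a) / 2) * cos ((x - b) / 2) * cos ((x - c) / 2)) / 2) x := by
  have sa := hasDerivAt_sin_sub_div_two a x
  have sb := hasDerivAt_sin_sub_div_two b x
  have sc := hasDerivAt_sin_sub_div_two c x
  have ca := hasDerivAt_cos_sub_div_two a x
  have cb := hasDerivAt_cos_sub_div_two b x
  have cc := hasDerivAt_cos_sub_div_two c x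
  have := ((((ca.fun_mul sb).fun_mul sc).fun_add ((sa.fun_mul cb).fun_mul sc)).fun_add
    ((sa.fun_mul sb).fun_mul cc)).div_const 2
  exact this.congr_deriv (by unfold sinTriple; ring)

theorem sin_sub_div_two_eq_neg (a x : ℝ) : sin ((a - x) / 2) = -sin ((x - a) / 2) := by
  rw [← neg_sub x a, neg_div, sin_neg]

noncomputable def trigBSplinePieceTwo (h ω x : ℝ) : ℝ :=
  -(sinTriple 0 0 (2 * h) x + sinTriple 0 (3 * h) h x + sinTriple (4 * h) h h x) / ω

theorem deriv_deriv_trigBSplinePieceTwo_two_mul (h ω : ℝ) :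
    deriv (deriv (trigBSplinePieceTwo h ω)) (2 * h)
      = -(3 * sin (h / 2) * cos (h / 2) ^ 3) / ω := by
  have hD : deriv (trigBSplinePieceTwo h ω)
      = fun x => -(sinTripleDeriv 0 0 (2 * h) x + sinTripleDeriv 0 (3 * h) h x
          + sinTripleDeriv (4 * h) h h x) / ω :=
    funext fun x => ((((hasDerivAt_sinTriple _ _ _ x).fun_add
      (hasDerivAt_sinTriple _ _ _ x)).fun_add
      (hasDerivAt_sinTriple _ _ _ x)).fun_neg.div_const ω).deriv
  rw [hD, ((((hasDerivAt_sinTripleDeriv _ _ _ _).fun_add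
    (hasDerivAt_sinTripleDeriv _ _ _ _)).fun_add
    (hasDerivAt_sinTripleDeriv _ _ _ _)).fun_neg.div_const ω).deriv]
  congr 2
  simp only [sinTriple]
  rw [show (2 * h - 0) / 2 = 2 * (h / 2) by ring, show (2 * h - h) / 2 = h / 2 by ring,
    show (2 * h - 2 * h) / 2 = 0 by ring, show (2 * h - 3 * h) / 2 = -(h / 2) by ring,
    show (2 * h - 4 * h) / 2 = -(2 * (h / 2)) by ring]
  simp only [sin_neg, cos_neg, sin_zero, cos_zero, sin_two_mul, cos_two_mul]
  linear_combination (3 * sin (h / 2) * cos (h / 2)) * sin_sq_add_cos_sq (h / 2)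

theorem sin_mul_sin_mul_sin_three_mul_div_two (h : ℝ) :
    sin (h / 2) * sin h * sin (3 * h / 2)
      = 2 * sin (h / 2) ^ 3 * cos (h / 2) * (1 + 2 * cos h) := by
  have hs : sin h = 2 * sin (h / 2) * cos (h / 2) := by
    rw [← sin_two_mul, mul_div_cancel₀ h two_ne_zero]
  have hc : cos h = 2 * cos (h / 2) ^ 2 - 1 := by
    rw [← cos_two_mul, mul_div_cancel₀ h two_ne_zero]
  have h3 : sin (3 * h / 2) = 3 * sin (h / 2) - 4 * sin (h / 2) ^ 3 := by
    rw [← sin_three_mul, mul_div_assoc]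
  rw [hs, hc, h3]
  linear_combination (-8 * sin (h / 2) ^ 3 * cos (h / 2)) * sin_sq_add_cos_sq (h / 2)

theorem stmt_7_general (h : ℝ)
    (ω : ℝ) (hω : ω = Real.sin (h / 2) * Real.sin h * Real.sin (3 * h / 2))
    (P2 : ℝ → ℝ) (hP2 : P2 = fun x => (Real.sin (x / 2) * (Real.sin (x / 2) * Real.sin ((2 * h - x) / 2) + Real.sin ((3 * h - x) / 2) * Real.sin ((x - h) / 2)) + Real.sin ((4 * h - x) / 2) * Real.sin ((x - h) / 2) ^ 2) / ω)
    (P3 : ℝ → ℝ) (hP3 : P3 = fun x => (Real.sin ((4 * h - x) / 2) * (Real.sin ((x - h) / 2) * Real.sin ((3 * h - x) / 2) + Real.sin ((4 * h - x) / 2) * Real.sin ((x - 2 * h) / 2)) + Real.sin (x / 2) * Real.sin ((3 * h - x) / 2) ^ 2) / ω)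
    : deriv (deriv P2) (2 * h) = -(3 * Real.cos (h / 2) ^ 2) / (2 * Real.sin (h / 2) ^ 2 * (1 + 2 * Real.cos h)) ∧ deriv (deriv P3) (2 * h) = -(3 * Real.cos (h / 2) ^ 2) / (2 * Real.sin (h / 2) ^ 2 * (1 + 2 * Real.cos h)) := by
  have hP2' : P2 = trigBSplinePieceTwo h ω := by
    rw [hP2]
    funext x
    rw [sin_sub_div_two_eq_neg (2 * h) x, sin_sub_div_two_eq_neg (3 * h) x,
      sin_sub_div_two_eq_neg (4 * h) x]
    simp only [trigBSplinePieceTwo, sinTriple, sub_zero]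
    ring
  have hsym : P3 = fun x => P2 (4 * h - x) := by
    rw [hP3, hP2]
    funext x
    ring_nf
  have hω' : ω = (sin (h / 2) * cos (h / 2)) * (2 * sin (h / 2) ^ 2 * (1 + 2 * cos h)) := by
    rw [hω, sin_mul_sin_mul_sin_three_mul_div_two]
    ring
  have h2 : deriv (deriv P2) (2 * h)
      = -(3 * cos (h / 2) ^ 2) / (2 * sin (h / 2) ^ 2 * (1 + 2 * cos h)) := by
    rw [hP2', deriv_deriv_trigBSplinePieceTwo_two_mul, hω']
    rcases eq_or_ne (sin (h / 2) * cos (h / 2)) 0 with hsc | hsc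
    · -- both sides are `0`, one of them through division by zero
      rcases mul_eq_zero.1 hsc with hz | hz <;> simp [hz]
    · rw [← mul_div_mul_left (-(3 * cos (h / 2) ^ 2)) _ hsc]
      ring
  refine ⟨h2, ?_⟩
  rw [hsym, deriv_deriv_comp_const_sub, show 4 * h - 2 * h = 2 * h by ring, h2]

theorem stmt_7 (h : ℝ) (h0 : 0 < h) (h1 : h < 2 * Real.pi / 3)
    (ω : ℝ) (hω : ω = Real.sin (h / 2) * Real.sin h * Real.sin (3 * h / 2))
    (P2 : ℝ → ℝ) (hP2 : P2 = fun x => (Real.sin (x / 2) * (Real.sin (x / 2) * Real.sin ((2 * h - x) / 2) + Real.sin ((3 * h - x) / 2) * Real.sin ((x - h) / 2)) + Real.sin ((4 * h - x) / 2) * Real.sin ((x - h) / 2) ^ 2) / ω)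
    (P3 : ℝ → ℝ) (hP3 : P3 = fun x => (Real.sin ((4 * h - x) / 2) * (Real.sin ((x - h) / 2) * Real.sin ((3 * h - x) / 2) + Real.sin ((4 * h - x) / 2) * Real.sin ((x - 2 * h) / 2)) + Real.sin (x / 2) * Real.sin ((3 * h - x) / 2) ^ 2) / ω)
    : deriv (deriv P2) (2 * h) = -(3 * Real.cos (h / 2) ^ 2) / (2 * Real.sin (h / 2) ^ 2 * (1 + 2 * Real.cos h)) ∧ deriv (deriv P3) (2 * h) = -(3 * Real.cos (h / 2) ^ 2) / (2 * Real.sin (h / 2) ^ 2 * (1 + 2 * Real.cos h)) :=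
  stmt_7_general h ω hω P2 hP2 P3 hP3
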